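/- If N is a trim partial DFA recognizing L and p* is a state of the minimal automaton M of L reachable from the initial state by exactly n words, then N has at most n states equivalent to p*. -/

import Mathlib

/-- A partial deterministic finite automaton (partial DFA). -/
structure PDFA (Q A : Type) where
  step : Q → A → Option Q
  init : Q
  acc : Q → Prop

namespace PDFA

variable {Q A : Type}

/-- Extended (partial) transition function on words. -/
def run (M : PDFA Q A) : Q → List A → Option Q
  | q, [] => some q
  | q, a :: w => (M.step q a).bind fun q' => M.run q' w

/-- The language accepted from state `q`. -/
def LangFrom (M : PDFA Q A) (q : Q) : Set (List A) :=
  {w | ∃ q', M.run q w = some q' ∧ M.acc q'}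

/-- The language of the automaton. -/
def Lang (M : PDFA Q A) : Set (List A) := M.LangFrom M.init

/-- An automaton is reversible if distinct states are never merged by a letter. -/
def Reversible (M : PDFA Q A) : Prop :=
  ∀ p q a r, M.step p a = some r → M.step q a = some r → p = q

/-- `Θ` is a congruence: an equivalence relation saturating the final states and
compatible with the (partial) action, including definedness. -/
def IsCongruence (M : PDFA Q A) (Θ : Q → Q → Prop) : Prop :=
  Equivalence Θ ∧
  (∀ p q, Θ p q → (M.acc p ↔ M.acc q)) ∧
  (∀ p q a, Θ p q → ((M.step p a).isSome ↔ (M.step q a).isSome) ∧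
    ∀ p' q', M.step p a = some p' → M.step q a = some q' → Θ p' q')

/-- A reversible congruence: a congruence whose factor automaton is reversible,
equivalently `p·a Θ q·a` (both defined) implies `p Θ q`. -/
def IsRevCongruence (M : PDFA Q A) (Θ : Q → Q → Prop) : Prop :=
  M.IsCongruence Θ ∧
  ∀ p q a p' q', M.step p a = some p' → M.step q a = some q' → Θ p' q' → Θ p q

def Reachable (M : PDFA Q A) (q : Q) : Prop := ∃ w, M.run M.init w = some q

def Productive (M : PDFA Q A) (q : Q) : Prop := ∃ w, w ∈ M.LangFrom q

/-- A trim automaton: all states reachable and productive. -/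
def Trim (M : PDFA Q A) : Prop := ∀ q, M.Reachable q ∧ M.Productive q

/-- The set of access words of a state. -/
def AccessWords (M : PDFA Q A) (q : Q) : Set (List A) :=
  {w | M.run M.init w = some q}

/-- An `∞`-state: reachable by infinitely many words. -/
def InfState (M : PDFA Q A) (q : Q) : Prop := (M.AccessWords q).Infinite

/-- A `1`-state: reachable by exactly one word. -/
def OneState (M : PDFA Q A) (q : Q) : Prop := ∃! w, w ∈ M.AccessWords q

/-- A `⊕`-state: neither a `1`-state nor an `∞`-state. -/
def PlusState (M : PDFA Q A) (q : Q) : Prop := ¬ M.OneState q ∧ ¬ M.InfState q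

/-- An irreversible state: reachable from two distinct states by a common word. -/
def IrrevState (M : PDFA Q A) (r : Q) : Prop :=
  ∃ p₁ p₂ u, p₁ ≠ p₂ ∧ M.run p₁ u = some r ∧ M.run p₂ u = some r

/-- Zig-zag states: the least set containing the `∞`-states, closed under defined
forward transitions, and containing every `⊕`-state with a transition into the set. -/
inductive ZigZag (M : PDFA Q A) : Q → Prop
  | inf {q} : M.InfState q → ZigZag M q
  | fwd {q a q'} : ZigZag M q → M.step q a = some q' → ZigZag M q'
  | back {q a q'} : M.PlusState q → M.step q a = some q' → ZigZag M q' → ZigZag M q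

/-- A reduced reversible automaton: trim, reversible, with no nontrivial reversible
congruence. -/
def ReducedReversible (M : PDFA Q A) : Prop :=
  M.Trim ∧ M.Reversible ∧ ∀ Θ, M.IsRevCongruence Θ → ∀ p q, Θ p q → p = q

/-- `n`-fold repetition of a word. -/
def wpow (w : List A) (n : ℕ) : List A := (List.replicate n w).flatten

end PDFA

/-!
Choose an access word `w_q` for every state `q` of `N`. If `q` is equivalent to `p`, then `w_q`
leads in `M` to a state with the same future language as `q`, which by minimality of `M` is `p`;
so `q ↦ w_q` maps the states equivalent to `p` into the access words of `p`, injectively since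
`N` is deterministic.
-/

namespace PDFA

variable {Q Q' A : Type}

theorem run_append (M : PDFA Q A) (q : Q) (u v : List A) :
    M.run q (u ++ v) = (M.run q u).bind (fun q' => M.run q' v) := by
  induction u generalizing q with
  | nil => simp [run]
  | cons a u ih =>
    simp only [List.cons_append, run]
    cases M.step q a with
    | none => simp
    | some q' => simpa using ih q'

theorem mem_langFrom_iff_append_mem_lang (M : PDFA Q A) {q : Q} {w : List A}
    (h : M.run M.init w = some q) (x : List A) :
    x ∈ M.LangFrom q ↔ w ++ x ∈ M.Lang := by
  simp [Lang, LangFrom, run_append, h]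

theorem exists_run_eq_langFrom_eq_of_lang_eq {N : PDFA Q A} {M : PDFA Q' A}
    (hlang : N.Lang = M.Lang) {q : Q} {w : List A} (hw : N.run N.init w = some q)
    (hq : N.Productive q) :
    ∃ q', M.run M.init w = some q' ∧ N.LangFrom q = M.LangFrom q' := by
  obtain ⟨x, hx⟩ := hq
  rw [N.mem_langFrom_iff_append_mem_lang hw, hlang] at hx
  obtain ⟨r, hr, -⟩ := hx
  rw [run_append] at hr
  obtain ⟨q', hq', -⟩ := Option.bind_eq_some_iff.mp hr
  refine ⟨q', hq', Set.ext fun y => ?_⟩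
  rw [N.mem_langFrom_iff_append_mem_lang hw, M.mem_langFrom_iff_append_mem_lang hq', hlang]

noncomputable def accessWord {N : PDFA Q A} (hN : N.Trim) (q : Q) : List A :=
  (hN q).1.choose

theorem run_accessWord {N : PDFA Q A} (hN : N.Trim) (q : Q) :
    N.run N.init (accessWord hN q) = some q :=
  (hN q).1.choose_spec

theorem accessWord_injective {N : PDFA Q A} (hN : N.Trim) :
    Function.Injective (accessWord hN) := fun q₁ q₂ h =>
  Option.some_injective _ <| by rw [← run_accessWord hN q₁, h, run_accessWord hN q₂]

theorem accessWord_mem_accessWords {N : PDFA Q A} {M : PDFA Q' A} (hN : N.Trim)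
    (hMmin : ∀ p q : Q', M.LangFrom p = M.LangFrom q → p = q) (hlang : N.Lang = M.Lang)
    {p : Q'} {q : Q} (hq : N.LangFrom q = M.LangFrom p) :
    accessWord hN q ∈ M.AccessWords p := by
  obtain ⟨q', hq', hlangq⟩ :=
    exists_run_eq_langFrom_eq_of_lang_eq hlang (run_accessWord hN q) (hN q).2
  rwa [← hMmin q' p (hlangq ▸ hq)]

end PDFA

theorem stmt19_general {Q Qm A : Type} (N : PDFA Q A) (M : PDFA Qm A)
    (hMmin : ∀ p q : Qm, M.LangFrom p = M.LangFrom q → p = q)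
    (hNtrim : N.Trim) (hlang : N.Lang = M.Lang)
    (p : Qm) (n : ℕ)
    (hfin : (M.AccessWords p).Finite)
    (hn : (M.AccessWords p).ncard = n) :
    {q : Q | N.LangFrom q = M.LangFrom p}.Finite ∧
    {q : Q | N.LangFrom q = M.LangFrom p}.ncard ≤ n := by
  have hmaps : Set.MapsTo (PDFA.accessWord hNtrim) {q : Q | N.LangFrom q = M.LangFrom p}
      (M.AccessWords p) := fun _ hq => PDFA.accessWord_mem_accessWords hNtrim hMmin hlang hq
  have hinj : Set.InjOn (PDFA.accessWord hNtrim) {q : Q | N.LangFrom q = M.LangFrom p} :=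
    (PDFA.accessWord_injective hNtrim).injOn
  exact ⟨Set.Finite.of_finite_image (hfin.subset hmaps.image_subset) hinj,
    hn ▸ Set.ncard_le_ncard_of_injOn _ hmaps hinj hfin⟩

/-- If `N` is a trim partial DFA recognizing the same language as the
minimal trim partial DFA `M`, and `p` is a state of `M` reached by exactly `n` words,
then `N` has at most `n` states equivalent to `p`. -/
theorem stmt19 {Q Qm A : Type} (N : PDFA Q A) (M : PDFA Qm A)
    (hMtrim : M.Trim)
    (hMmin : ∀ p q : Qm, M.LangFrom p = M.LangFrom q → p = q)
    (hNtrim : N.Trim) (hlang : N.Lang = M.Lang)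
    (p : Qm) (n : ℕ)
    (hfin : (M.AccessWords p).Finite)
    (hn : (M.AccessWords p).ncard = n) :
    {q : Q | N.LangFrom q = M.LangFrom p}.Finite ∧
    {q : Q | N.LangFrom q = M.LangFrom p}.ncard ≤ n :=
  stmt19_general N M hMmin hNtrim hlang p n hfin hn
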